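/- arXiv:1808.09908 — 2 statements merged into one kernel-verified Lean document; each statement's English description precedes it below -/
import Mathlib

section
/- Let H be a connected interval d-uniform hypergraph with no isolated vertices (d ≥ 2, at least one edge). Then the power domination zero forcing number of H satisfies Zpd(H) = 1. -/
/-! Common definitions: hypermatrices, hypergraphs, zero forcing, infection,
power domination zero forcing. -/

/-- A `d`-hypermatrix of dimension `n` over `F` is symmetric if its entries are
invariant under permutations of the indices. -/
def HMSymmetric {F : Type*} {n d : ℕ} (A : (Fin d → Fin n) → F) : Prop :=
  ∀ (i : Fin d → Fin n) (π : Equiv.Perm (Fin d)), A (i ∘ π) = A i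

/-- The space of null vectors of a `d`-hypermatrix: `x` is a null vector if
`∑ j, a_{i₁ ⋯ i_{d-1} j} x_j = 0` for every choice of indices `i₁, …, i_{d-1}`
(the last index is summed against `x`). -/
def nullSpace {F : Type*} [Field F] {n d : ℕ} (A : (Fin d → Fin n) → F) :
    Submodule F (Fin n → F) where
  carrier := {x | ∀ i : Fin d → Fin n,
    ∑ j : Fin n, A (fun k => if (k : ℕ) = d - 1 then j else i k) * x j = 0}
  add_mem' := by
    intro a b ha hb i
    simp only [Set.mem_setOf_eq] at ha hb
    simp only [Set.mem_setOf_eq, Pi.add_apply, mul_add, Finset.sum_add_distrib, ha i, hb i,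
      add_zero]
  zero_mem' := by
    intro i
    simp
  smul_mem' := by
    intro c x hx i
    simp only [Set.mem_setOf_eq] at hx
    simp only [Set.mem_setOf_eq, Pi.smul_apply, smul_eq_mul]
    have h : ∑ j : Fin n, A (fun k => if (k : ℕ) = d - 1 then j else i k) * (c * x j)
        = c * ∑ j : Fin n, A (fun k => if (k : ℕ) = d - 1 then j else i k) * x j := by
      rw [Finset.mul_sum]
      exact Finset.sum_congr rfl (fun j _ => by ring)
    rw [h, hx i, mul_zero]

/-- The nullity of a hypermatrix is the dimension of its space of null vectors. -/
noncomputable def hmNullity (F : Type*) [Field F] {n d : ℕ}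
    (A : (Fin d → Fin n) → F) : ℕ :=
  Module.finrank F (nullSpace A)

/-- A hypergraph on vertex type `V`: a set of hyperedges, each a finite set of
vertices. -/
structure FHypergraph (V : Type*) where
  edges : Set (Finset V)

/-- A hypergraph is `d`-uniform if every edge has exactly `d` vertices. -/
def FHypergraph.IsUniform {V : Type*} (H : FHypergraph V) (d : ℕ) : Prop :=
  ∀ e ∈ H.edges, e.card = d

/-- A hypercubical `d`-hypermatrix is graphical if it is symmetric and the entries
indexed by non-distinct indices vanish. -/
def Graphical {F : Type*} [Field F] {n d : ℕ} (A : (Fin d → Fin n) → F) : Prop :=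
  HMSymmetric A ∧ ∀ i : Fin d → Fin n, ¬ Function.Injective i → A i = 0

/-- The hypergraph of a graphical `d`-hypermatrix: edges are the (distinct) index
sets of nonzero entries. -/
def hypergraphOf {F : Type*} [Field F] {n d : ℕ} (A : (Fin d → Fin n) → F) :
    FHypergraph (Fin n) :=
  ⟨{e | ∃ i : Fin d → Fin n, Function.Injective i ∧ Finset.image i Finset.univ = e ∧ A i ≠ 0}⟩

/-- `A ∈ S(H)`: `A` is graphical and its hypergraph is `H`. -/
def InSFam {F : Type*} [Field F] {n d : ℕ} (H : FHypergraph (Fin n))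
    (A : (Fin d → Fin n) → F) : Prop :=
  Graphical A ∧ hypergraphOf A = H

/-- The maximum nullity `M(H)` of a `d`-uniform hypergraph `H` over the field `F`. -/
noncomputable def maxNullity (F : Type*) [Field F] {n : ℕ} (d : ℕ)
    (H : FHypergraph (Fin n)) : ℕ :=
  sSup {k | ∃ A : (Fin d → Fin n) → F, InSFam H A ∧ hmNullity F A = k}

/-- One application of the hypergraph color change rule: a set `S` of `d-1`
distinct vertices forces the white vertex `w` (i.e. `S ∪ {w}` is an edge and
`S ∪ {u}` being an edge for a white `u` implies `u = w`), turning the blue set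
`B` into `B'`. -/
def ZFStep {V : Type*} [DecidableEq V] (H : FHypergraph V) (d : ℕ) (B B' : Set V) : Prop :=
  ∃ (S : Finset V) (w : V), S.card = d - 1 ∧ w ∉ S ∧ w ∉ B ∧
    insert w S ∈ H.edges ∧
    (∀ u : V, u ∉ B → insert u S ∈ H.edges → u = w) ∧
    B' = insert w B

/-- `B` is a hypergraph zero forcing set: starting from blue set `B`, repeated
applications of the hypergraph color change rule color every vertex blue. -/
def IsZFSet {V : Type*} [DecidableEq V] (H : FHypergraph V) (d : ℕ) (B : Set V) : Prop :=
  Relation.ReflTransGen (ZFStep H d) B Set.univ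

/-- The hypergraph zero forcing number `Z₀(H)`: the minimum cardinality of a
hypergraph zero forcing set. -/
noncomputable def Z0 {V : Type*} [DecidableEq V] (H : FHypergraph V) (d : ℕ) : ℕ :=
  sInf {k | ∃ B : Finset V, B.card = k ∧ IsZFSet H d (↑B : Set V)}

/-- One application of the infection rule: a nonempty set `S` of infected vertices
contained in an edge `e`, such that for every uninfected `u ∉ e` the set `S ∪ {u}`
is contained in no edge, infects all of `e`. -/
def InfStep {V : Type*} [DecidableEq V] (H : FHypergraph V) (B B' : Set V) : Prop :=
  ∃ (S e : Finset V), e ∈ H.edges ∧ S.Nonempty ∧ (↑S : Set V) ⊆ B ∧ S ⊆ e ∧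
    (∀ u : V, u ∉ B → u ∉ e → ∀ e' ∈ H.edges, ¬ insert u S ⊆ e') ∧
    B' = B ∪ (↑e : Set V)

/-- `B` is an infection set: starting from `B` infected, repeated applications of
the infection rule infect every vertex. -/
def IsInfectionSet {V : Type*} [DecidableEq V] (H : FHypergraph V) (B : Set V) : Prop :=
  Relation.ReflTransGen (InfStep H) B Set.univ

/-- The infection number `I(H)`. -/
noncomputable def infNum {V : Type*} [DecidableEq V] (H : FHypergraph V) : ℕ :=
  sInf {k | ∃ B : Finset V, B.card = k ∧ IsInfectionSet H (↑B : Set V)}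

/-- `w` is a neighbor of `v` if some edge contains both (and `v ≠ w`). -/
def FHypergraph.Neighbor {V : Type*} (H : FHypergraph V) (v w : V) : Prop :=
  v ≠ w ∧ ∃ e ∈ H.edges, v ∈ e ∧ w ∈ e

/-- One application of the power domination color change rule: if all white
neighbors of a blue vertex `v` lie in a single edge containing `v`, they all
become blue. -/
def PDStep {V : Type*} (H : FHypergraph V) (B B' : Set V) : Prop :=
  ∃ v ∈ B, ∃ e ∈ H.edges, v ∈ e ∧
    (∀ w : V, H.Neighbor v w → w ∉ B → w ∈ e) ∧
    B' = B ∪ {w | H.Neighbor v w ∧ w ∉ B}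

/-- `B` is a power domination zero forcing set. -/
def IsPDZFSet {V : Type*} (H : FHypergraph V) (B : Set V) : Prop :=
  Relation.ReflTransGen (PDStep H) B Set.univ

/-- The power domination zero forcing number `Zpd(H)`. -/
noncomputable def Zpd {V : Type*} (H : FHypergraph V) : ℕ :=
  sInf {k | ∃ B : Finset V, B.card = k ∧ IsPDZFSet H (↑B : Set V)}

/-- The complete `d`-uniform hypergraph on `Fin n`: all `d`-element subsets. -/
def completeHG (n d : ℕ) : FHypergraph (Fin n) :=
  ⟨{e : Finset (Fin n) | e.card = d}⟩

/-- Two vertices are linked if some edge contains both. -/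
def FHypergraph.Linked {V : Type*} (H : FHypergraph V) (a b : V) : Prop :=
  ∃ e ∈ H.edges, a ∈ e ∧ b ∈ e

/-- A hypergraph is connected if any two vertices are joined by a path. -/
def FHypergraph.Connected {V : Type*} (H : FHypergraph V) : Prop :=
  ∀ u v : V, Relation.ReflTransGen H.Linked u v

/-- The connected component of a vertex `v`. -/
def componentSet {V : Type*} (H : FHypergraph V) (v : V) : Set V :=
  {u | Relation.ReflTransGen H.Linked v u}

/-- A vertex is isolated if it belongs to no edge. -/
def FHypergraph.IsIsolated {V : Type*} (H : FHypergraph V) (v : V) : Prop :=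
  ∀ e ∈ H.edges, v ∉ e

/-- An interval `d`-uniform hypergraph on `Fin n` (vertices numbered `0,…,n-1`):
every edge consists of `d` consecutive vertices `{ℓ, ℓ+1, …, ℓ+d-1}`. -/
def IsIntervalHG {n : ℕ} (H : FHypergraph (Fin n)) (d : ℕ) : Prop :=
  ∀ e ∈ H.edges, ∃ ℓ : ℕ, e.image Fin.val = Finset.Ico ℓ (ℓ + d)

/-- The edge set of the special interval hypergraph `SI(d,s)` on vertices
`0,…,sd` (0-indexed): left endpoints `(i-1)d` and `(i-1)d+1` for `i = 1,…,s`. -/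
def siEdges (n d s : ℕ) : Set (Finset (Fin n)) :=
  {e | ∃ i < s, e.image Fin.val = Finset.Ico (i * d) (i * d + d) ∨
       e.image Fin.val = Finset.Ico (i * d + 1) (i * d + 1 + d)}

/-- The component of `H` induced on `U` is (a copy of) the special interval
hypergraph `SI(d,s)` for some `s ≥ 1`: the vertices of `U` are `sd+1` consecutive
integers starting at `a`, and the edges of `H` contained in `U` are exactly the
shifted special-interval edges. -/
def IsSIComponent {n : ℕ} (H : FHypergraph (Fin n)) (d : ℕ) (U : Set (Fin n)) : Prop :=
  ∃ a s : ℕ, 1 ≤ s ∧ Fin.val '' U = Set.Ico a (a + s * d + 1) ∧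
    ∀ e : Finset (Fin n),
      (e ∈ H.edges ∧ (↑e : Set (Fin n)) ⊆ U) ↔
      ∃ i < s, e.image Fin.val = Finset.Ico (a + i * d) (a + i * d + d) ∨
               e.image Fin.val = Finset.Ico (a + i * d + 1) (a + i * d + 1 + d)

/-- The set of values `{ℓ, ℓ+1, …, ℓ+d-1}` taken modulo `n` (a circular arc). -/
def arcEdge (n d ℓ : ℕ) : Finset ℕ :=
  (Finset.range d).image (fun k => (ℓ + k) % n)

/-- The edge set of the special circular-arc hypergraph `SCA(d,s)` on `n = sd`
vertices (0-indexed): first endpoints `(i-1)d` and `(i-1)d+1` for `i = 1,…,s`. -/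
def scaEdges (n d s : ℕ) : Set (Finset (Fin n)) :=
  {e | ∃ i < s, e.image Fin.val = arcEdge n d (i * d) ∨
       e.image Fin.val = arcEdge n d (i * d + 1)}

/-- The `t`-tight circular-arc `d`-hypergraph on `d+1` vertices: edges are the
arcs of length `d` with first endpoints `(i-1)(d-t)` (0-indexed) for
`i = 1, …, (d+1)/(d-t)`. -/
def tightCA (d t : ℕ) : FHypergraph (Fin (d + 1)) :=
  ⟨{e | ∃ i < (d + 1) / (d - t), e.image Fin.val = arcEdge (d + 1) d (i * (d - t))}⟩

/-- Edge deletion `H - e`. -/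
def deleteEdge {V : Type*} (H : FHypergraph V) (e : Finset V) : FHypergraph V :=
  ⟨H.edges \ {e}⟩

/-- Vertex deletion `H - v`: the vertex set becomes `{u // u ≠ v}` and the edges
are the edges of `H` not containing `v`. -/
def deleteVertex {V : Type*} [DecidableEq V] (H : FHypergraph V) (v : V) : FHypergraph {u : V // u ≠ v} :=
  ⟨{e | e.image Subtype.val ∈ H.edges}⟩

/-- The Cartesian product of hypergraphs. -/
def cartProd {V V' : Type*} [DecidableEq V] [DecidableEq V']
    (H : FHypergraph V) (H' : FHypergraph V') : FHypergraph (V × V') :=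
  ⟨{E | (∃ e ∈ H.edges, ∃ v' : V', E = e ×ˢ ({v'} : Finset V')) ∨
        (∃ v : V, ∃ e' ∈ H'.edges, E = ({v} : Finset V) ×ˢ e')}⟩


/-- Membership in an interval edge. -/
lemma mem_iff_of_image_Ico {n d : ℕ} {e : Finset (Fin n)} {ℓ : ℕ}
    (h : e.image Fin.val = Finset.Ico ℓ (ℓ + d)) (x : Fin n) :
    x ∈ e ↔ ℓ ≤ x.val ∧ x.val < ℓ + d := by
  constructor
  · intro hx
    have hh : x.val ∈ e.image Fin.val := Finset.mem_image_of_mem _ hx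
    rw [h, Finset.mem_Ico] at hh
    exact hh
  · intro hx
    have hh : x.val ∈ e.image Fin.val := by rw [h, Finset.mem_Ico]; exact hx
    obtain ⟨y, hy, hyx⟩ := Finset.mem_image.mp hh
    exact (Fin.val_injective hyx) ▸ hy

/-- A path from below `m` to at-least `m` crosses the boundary. -/
lemma cross_edge {n d : ℕ} {H : FHypergraph (Fin n)} (hint : IsIntervalHG H d)
    {m : ℕ} {u v : Fin n} (hpath : Relation.ReflTransGen H.Linked u v)
    (hu : u.val < m) :
    m ≤ v.val →
    ∃ ℓ, ℓ < m ∧ m < ℓ + d ∧ ∃ e ∈ H.edges, e.image Fin.val = Finset.Ico ℓ (ℓ + d) := by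
  induction hpath with
  | refl => intro hv; omega
  | tail h' hlink ih =>
    rename_i w z
    intro hv
    by_cases hw : w.val < m
    · obtain ⟨e, he, hwe, hze⟩ := hlink
      obtain ⟨ℓ, hℓ⟩ := hint e he
      have h1 := (mem_iff_of_image_Ico hℓ w).mp hwe
      have h2 := (mem_iff_of_image_Ico hℓ z).mp hze
      exact ⟨ℓ, by omega, by omega, e, he, hℓ⟩
    · exact ih (by omega)

lemma forcing_aux {n d : ℕ} (hd : 2 ≤ d) {H : FHypergraph (Fin n)}
    (hint : IsIntervalHG H d) (hconn : H.Connected) :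
    ∀ k m : ℕ, 1 ≤ m → m ≤ n → n - m ≤ k →
      Relation.ReflTransGen (PDStep H) {x : Fin n | x.val < m} Set.univ := by
  intro k
  induction k with
  | zero =>
    intro m h1 h2 h3
    have hm : {x : Fin n | x.val < m} = Set.univ := by
      ext x; simp only [Set.mem_setOf_eq, Set.mem_univ, iff_true]
      have := x.isLt; omega
    rw [hm]
  | succ k ih =>
    intro m h1 h2 h3
    by_cases hmn : n ≤ m
    · have hm : {x : Fin n | x.val < m} = Set.univ := by
        ext x; simp only [Set.mem_setOf_eq, Set.mem_univ, iff_true]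
        have := x.isLt; omega
      rw [hm]
    · have hmn' : m < n := by omega
      set v : Fin n := ⟨m - 1, by omega⟩ with hv
      obtain ⟨ℓc, hℓc1, hℓc2, ec, hec, hecim⟩ :=
        cross_edge hint (hconn v ⟨m, hmn'⟩) (by simp only [hv]; omega) (le_refl m)
      set T : Set ℕ := {ℓ | ∃ e ∈ H.edges, e.image Fin.val = Finset.Ico ℓ (ℓ + d) ∧ v ∈ e}
        with hT
      have hℓcT : ℓc ∈ T := by
        refine ⟨ec, hec, hecim, ?_⟩
        rw [mem_iff_of_image_Ico hecim]
        simp only [hv]; omega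
      have hbdd : BddAbove T := by
        refine ⟨n, fun ℓ hℓ => ?_⟩
        obtain ⟨e, he, him, hve⟩ := hℓ
        have : ℓ ∈ e.image Fin.val := by rw [him, Finset.mem_Ico]; omega
        obtain ⟨y, _, hy⟩ := Finset.mem_image.mp this
        have := y.isLt; omega
      have hmem : sSup T ∈ T := Nat.sSup_mem ⟨ℓc, hℓcT⟩ hbdd
      set ℓ₀ := sSup T with hℓ₀
      obtain ⟨e₀, he₀, he₀im, hve₀⟩ := hmem
      have hℓcℓ₀ : ℓc ≤ ℓ₀ := le_csSup hbdd hℓcT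
      have hv0 : ℓ₀ ≤ m - 1 ∧ m - 1 < ℓ₀ + d := by
        have := (mem_iff_of_image_Ico he₀im v).mp hve₀
        simpa [hv] using this
      set L := ℓ₀ + d with hLdef
      have hL1 : m < L := by omega
      have hL2 : L ≤ n := by
        have : ℓ₀ + d - 1 ∈ e₀.image Fin.val := by rw [he₀im, Finset.mem_Ico]; omega
        obtain ⟨y, _, hy⟩ := Finset.mem_image.mp this
        have := y.isLt; omega
      have hstep : PDStep H {x : Fin n | x.val < m} {x : Fin n | x.val < L} := by
        refine ⟨v, by simp only [Set.mem_setOf_eq, hv]; omega, e₀, he₀, hve₀, ?_, ?_⟩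
        · intro w hnb hwB
          obtain ⟨hne', e', he', hve', hwe'⟩ := hnb
          obtain ⟨ℓ', hℓ'⟩ := hint e' he'
          have hℓ'T : ℓ' ≤ ℓ₀ := le_csSup hbdd ⟨e', he', hℓ', hve'⟩
          have hw' := (mem_iff_of_image_Ico hℓ' w).mp hwe'
          simp only [Set.mem_setOf_eq, not_lt] at hwB
          rw [mem_iff_of_image_Ico he₀im]
          omega
        · ext x
          simp only [Set.mem_union, Set.mem_setOf_eq]
          constructor
          · intro hx
            by_cases hxm : x.val < m
            · exact Or.inl hxm
            · refine Or.inr ⟨⟨?_, e₀, he₀, hve₀, ?_⟩, by omega⟩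
              · intro h
                have : v.val = x.val := congrArg Fin.val h
                simp only [hv] at this; omega
              · rw [mem_iff_of_image_Ico he₀im]; omega
          · rintro (h | ⟨⟨hne', e', he', hve', hxe'⟩, hxB⟩)
            · omega
            · obtain ⟨ℓ', hℓ'⟩ := hint e' he'
              have hℓ'T : ℓ' ≤ ℓ₀ := le_csSup hbdd ⟨e', he', hℓ', hve'⟩
              have hx' := (mem_iff_of_image_Ico hℓ' x).mp hxe'
              omega
      exact Relation.ReflTransGen.head hstep (ih L (by omega) hL2 (by omega))

theorem stmt11 {n d : ℕ} (hd : 2 ≤ d) (H : FHypergraph (Fin n))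
    (hint : IsIntervalHG H d) (hconn : H.Connected)
    (hiso : ∀ v : Fin n, ¬ H.IsIsolated v) (hne : H.edges.Nonempty) :
    Zpd H = 1 := by
  have hn : 0 < n := by
    obtain ⟨e, he⟩ := hne
    obtain ⟨ℓ, hℓ⟩ := hint e he
    have : ℓ ∈ e.image Fin.val := by rw [hℓ, Finset.mem_Ico]; omega
    obtain ⟨y, _, _⟩ := Finset.mem_image.mp this
    exact y.pos
  have h1 : 1 ∈ {k | ∃ B : Finset (Fin n), B.card = k ∧ IsPDZFSet H (↑B : Set (Fin n))} := by
    refine ⟨{⟨0, hn⟩}, Finset.card_singleton _, ?_⟩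
    have hB : (↑({⟨0, hn⟩} : Finset (Fin n)) : Set (Fin n)) = {x : Fin n | x.val < 1} := by
      ext x
      simp only [Finset.coe_singleton, Set.mem_singleton_iff, Set.mem_setOf_eq]
      constructor
      · rintro rfl; simp
      · intro h
        have hx0 : x.val = 0 := by omega
        exact Fin.ext (by simp [hx0])
    rw [hB]
    exact forcing_aux hd hint hconn n 1 le_rfl hn (by omega)
  have h0 : 0 ∉ {k | ∃ B : Finset (Fin n), B.card = k ∧ IsPDZFSet H (↑B : Set (Fin n))} := by
    rintro ⟨B, hB, hZF⟩
    rw [Finset.card_eq_zero] at hB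
    subst hB
    rcases Relation.ReflTransGen.cases_head hZF with h | ⟨c, hc, _⟩
    · have h2 := Set.mem_univ (⟨0, hn⟩ : Fin n)
      rw [← h] at h2
      simp at h2
    · obtain ⟨v, hv, _⟩ := hc
      simp at hv
  refine le_antisymm (Nat.sInf_le h1) ?_
  rw [Nat.one_le_iff_ne_zero]
  intro h
  rcases Nat.sInf_eq_zero.mp h with h' | h'
  · exact h0 h'
  · rw [h'] at h1; exact h1
end

section
/- Let H = (V, E) and H' = (V', E') be d-uniform hypergraphs with d ≥ 3 such that Z₀(H') = 1. Then Z₀(H □ H') = Z₀(H). -/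
section ZFHelpers
set_option linter.unusedSectionVars false

variable {V V' : Type*} [DecidableEq V] [DecidableEq V']

lemma image_fst_prodSing (e : Finset V) (v' : V') :
    (e ×ˢ ({v'} : Finset V')).image Prod.fst = e := by
  ext x; simp

lemma image_snd_singProd (v : V) (e' : Finset V') :
    (({v} : Finset V) ×ˢ e').image Prod.snd = e' := by
  ext x; simp

lemma finset_eq_prodSing {S : Finset (V × V')} {v' : V'} (h : ∀ p ∈ S, p.2 = v') :
    S = (S.image Prod.fst) ×ˢ ({v'} : Finset V') := by
  ext ⟨a, b⟩
  simp only [Finset.mem_product, Finset.mem_image, Finset.mem_singleton]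
  constructor
  · intro hm; exact ⟨⟨(a, b), hm, rfl⟩, h _ hm⟩
  · rintro ⟨⟨⟨x, y⟩, hm, rfl⟩, rfl⟩
    have hy : y = (x, y).2 := rfl
    rw [hy, h _ hm] at hm
    exact hm

lemma finset_eq_singProd {S : Finset (V × V')} {v : V} (h : ∀ p ∈ S, p.1 = v) :
    S = ({v} : Finset V) ×ˢ (S.image Prod.snd) := by
  ext ⟨a, b⟩
  simp only [Finset.mem_product, Finset.mem_image, Finset.mem_singleton]
  constructor
  · intro hm; exact ⟨h _ hm, ⟨(a, b), hm, rfl⟩⟩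
  · rintro ⟨rfl, ⟨⟨x, y⟩, hm, rfl⟩⟩
    have hy : x = (x, y).1 := rfl
    rw [hy, h _ hm] at hm
    exact hm

lemma card_image_fst {S : Finset (V × V')} {v' : V'} (h : ∀ p ∈ S, p.2 = v') :
    (S.image Prod.fst).card = S.card :=
  Finset.card_image_of_injOn fun p hp q hq hpq =>
    Prod.ext hpq ((h p hp).trans (h q hq).symm)

lemma card_image_snd {S : Finset (V × V')} {v : V} (h : ∀ p ∈ S, p.1 = v) :
    (S.image Prod.snd).card = S.card :=
  Finset.card_image_of_injOn fun p hp q hq hpq =>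
    Prod.ext ((h p hp).trans (h q hq).symm) hpq

lemma insert_prodSing (u : V) (S₁ : Finset V) (v' : V') :
    insert (u, v') (S₁ ×ˢ ({v'} : Finset V')) = (insert u S₁) ×ˢ ({v'} : Finset V') := by
  ext ⟨a, b⟩
  simp only [Finset.mem_insert, Finset.mem_product, Finset.mem_singleton, Prod.mk.injEq]
  tauto

lemma insert_singProd (v : V) (u : V') (S₂ : Finset V') :
    insert (v, u) (({v} : Finset V) ×ˢ S₂) = ({v} : Finset V) ×ˢ (insert u S₂) := by
  ext ⟨a, b⟩
  simp only [Finset.mem_insert, Finset.mem_product, Finset.mem_singleton, Prod.mk.injEq]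
  tauto

/-- Structure of product edges extending a "row" set of size `≥ 2`. -/
lemma prodEdge_row_struct {H : FHypergraph V} {H' : FHypergraph V'}
    {S₁ : Finset V} {v' : V'} {u : V × V'} (hcard : 2 ≤ S₁.card)
    (hmem : insert u (S₁ ×ˢ ({v'} : Finset V')) ∈ (cartProd H H').edges) :
    u.2 = v' ∧ insert u.1 S₁ ∈ H.edges := by
  obtain ⟨a, ha, b, hb, hab⟩ := Finset.one_lt_card.mp hcard
  rcases hmem with ⟨e, he, w', hE⟩ | ⟨v, e', _, hE⟩
  · have hav : (a, v') ∈ e ×ˢ ({w'} : Finset V') := by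
      rw [← hE]; exact Finset.mem_insert_of_mem (by simp [ha])
    have hw' : w' = v' := ((Finset.mem_product.mp hav).2 |> Finset.mem_singleton.mp).symm
    rw [hw'] at hE
    have hu : u ∈ e ×ˢ ({v'} : Finset V') := hE ▸ Finset.mem_insert_self u _
    have hu2 : u.2 = v' := Finset.mem_singleton.mp (Finset.mem_product.mp hu).2
    refine ⟨hu2, ?_⟩
    have him : (insert u (S₁ ×ˢ ({v'} : Finset V'))).image Prod.fst = e := by
      rw [hE, image_fst_prodSing]
    rw [Finset.image_insert, image_fst_prodSing] at him
    exact him ▸ he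
  · exfalso
    have hav : (a, v') ∈ ({v} : Finset V) ×ˢ e' := by
      rw [← hE]; exact Finset.mem_insert_of_mem (by simp [ha])
    have hbv : (b, v') ∈ ({v} : Finset V) ×ˢ e' := by
      rw [← hE]; exact Finset.mem_insert_of_mem (by simp [hb])
    have ha' : a = v := Finset.mem_singleton.mp (Finset.mem_product.mp hav).1
    have hb' : b = v := Finset.mem_singleton.mp (Finset.mem_product.mp hbv).1
    exact hab (ha'.trans hb'.symm)

/-- Structure of product edges extending a "column" set of size `≥ 2`. -/
lemma prodEdge_col_struct {H : FHypergraph V} {H' : FHypergraph V'}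
    {S₂ : Finset V'} {v : V} {u : V × V'} (hcard : 2 ≤ S₂.card)
    (hmem : insert u (({v} : Finset V) ×ˢ S₂) ∈ (cartProd H H').edges) :
    u.1 = v ∧ insert u.2 S₂ ∈ H'.edges := by
  obtain ⟨a, ha, b, hb, hab⟩ := Finset.one_lt_card.mp hcard
  rcases hmem with ⟨e, _, w', hE⟩ | ⟨x, e', he', hE⟩
  · exfalso
    have hav : (v, a) ∈ e ×ˢ ({w'} : Finset V') := by
      rw [← hE]; exact Finset.mem_insert_of_mem (by simp [ha])
    have hbv : (v, b) ∈ e ×ˢ ({w'} : Finset V') := by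
      rw [← hE]; exact Finset.mem_insert_of_mem (by simp [hb])
    have ha' : a = w' := Finset.mem_singleton.mp (Finset.mem_product.mp hav).2
    have hb' : b = w' := Finset.mem_singleton.mp (Finset.mem_product.mp hbv).2
    exact hab (ha'.trans hb'.symm)
  · have hav : (v, a) ∈ ({x} : Finset V) ×ˢ e' := by
      rw [← hE]; exact Finset.mem_insert_of_mem (by simp [ha])
    have hx : x = v := (Finset.mem_singleton.mp (Finset.mem_product.mp hav).1).symm
    rw [hx] at hE
    have hu : u ∈ ({v} : Finset V) ×ˢ e' := hE ▸ Finset.mem_insert_self u _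
    have hu1 : u.1 = v := Finset.mem_singleton.mp (Finset.mem_product.mp hu).1
    refine ⟨hu1, ?_⟩
    have him : (insert u (({v} : Finset V) ×ˢ S₂)).image Prod.snd = e' := by
      rw [hE, image_snd_singProd]
    rw [Finset.image_insert, image_snd_singProd] at him
    exact him ▸ he'

/-- One-step extension operator for hypergraph zero forcing. -/
def zfExtend (H : FHypergraph V) (d : ℕ) (B : Set V) : Set V :=
  B ∪ {w | ∃ S : Finset V, S.card = d - 1 ∧ w ∉ S ∧ insert w S ∈ H.edges ∧
    ∀ u, u ∉ B → insert u S ∈ H.edges → u = w}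

lemma subset_zfExtend (H : FHypergraph V) (d : ℕ) (B : Set V) : B ⊆ zfExtend H d B :=
  Set.subset_union_left

lemma reach_union_finset (H : FHypergraph V) (d : ℕ) (B : Set V) (T : Finset V)
    (hT : ∀ w ∈ T, ∃ S : Finset V, S.card = d - 1 ∧ w ∉ S ∧ insert w S ∈ H.edges ∧
      ∀ u, u ∉ B → insert u S ∈ H.edges → u = w) :
    Relation.ReflTransGen (ZFStep H d) B (B ∪ ↑T) := by
  classical
  induction T using Finset.induction_on with
  | empty => simpa using Relation.ReflTransGen.refl
  | @insert a T ha ih =>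
    have ih' := ih fun w hw => hT w (Finset.mem_insert_of_mem hw)
    have hset : B ∪ ↑(insert a T) = insert a (B ∪ ↑T) := by
      rw [Finset.coe_insert, Set.union_insert]
    by_cases haB : a ∈ B ∪ ↑T
    · rw [hset, Set.insert_eq_of_mem haB]; exact ih'
    · rw [hset]
      refine ih'.tail ?_
      obtain ⟨S, hS, haS, hedge, huniq⟩ := hT a (Finset.mem_insert_self a T)
      exact ⟨S, a, hS, haS, haB, hedge,
        fun u hu he => huniq u (fun hB => hu (Or.inl hB)) he, rfl⟩

lemma zfExtend_reach [Fintype V] (H : FHypergraph V) (d : ℕ) (B : Set V) :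
    Relation.ReflTransGen (ZFStep H d) B (zfExtend H d B) := by
  classical
  set T : Set V := {w | ∃ S : Finset V, S.card = d - 1 ∧ w ∉ S ∧ insert w S ∈ H.edges ∧
    ∀ u, u ∉ B → insert u S ∈ H.edges → u = w} with hTdef
  have hfin : T.Finite := Set.toFinite T
  have heq : zfExtend H d B = B ∪ ↑hfin.toFinset := by
    rw [Set.Finite.coe_toFinset]; rfl
  rw [heq]
  exact reach_union_finset H d B hfin.toFinset fun w hw => hfin.mem_toFinset.mp hw

lemma zfstep_subset {H : FHypergraph V} {d : ℕ} {B B' : Set V} (h : ZFStep H d B B') :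
    B ⊆ B' := by
  obtain ⟨S, w, _, _, _, _, _, rfl⟩ := h
  exact Set.subset_insert w B

lemma reach_subset {H : FHypergraph V} {d : ℕ} {X Y : Set V}
    (h : Relation.ReflTransGen (ZFStep H d) X Y) : X ⊆ Y := by
  induction h with
  | refl => exact subset_rfl
  | tail _ hstep ih => exact ih.trans (zfstep_subset hstep)

lemma exists_zfClosure [Fintype V] (H : FHypergraph V) (d : ℕ) (B : Set V) :
    ∃ C : Set V, B ⊆ C ∧ Relation.ReflTransGen (ZFStep H d) B C ∧
      ∀ B', ZFStep H d C B' → B' ⊆ C := by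
  classical
  have key : ∃ N, zfExtend H d ((zfExtend H d)^[N] B) = (zfExtend H d)^[N] B := by
    by_contra hc
    push_neg at hc
    have hgrow : ∀ n, n ≤ ((zfExtend H d)^[n] B).ncard := by
      intro n
      induction n with
      | zero => simp
      | succ n ih =>
        have hsub : (zfExtend H d)^[n] B ⊂ (zfExtend H d)^[n + 1] B := by
          rw [Function.iterate_succ_apply']
          exact ssubset_of_subset_of_ne (subset_zfExtend H d _) (Ne.symm (hc n))
        have := Set.ncard_lt_ncard hsub (Set.toFinite _)
        omega
    have h1 := hgrow (Fintype.card V + 1)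
    have h2 : ((zfExtend H d)^[Fintype.card V + 1] B).ncard ≤ Fintype.card V := by
      have := Set.ncard_le_ncard (Set.subset_univ ((zfExtend H d)^[Fintype.card V + 1] B))
        (Set.toFinite _)
      simpa [Set.ncard_univ] using this
    omega
  obtain ⟨N, hN⟩ := key
  have hreach : ∀ n, Relation.ReflTransGen (ZFStep H d) B ((zfExtend H d)^[n] B) := by
    intro n
    induction n with
    | zero => exact Relation.ReflTransGen.refl
    | succ n ih =>
      rw [Function.iterate_succ_apply']
      exact ih.trans (zfExtend_reach H d _)
  refine ⟨(zfExtend H d)^[N] B, ?_, hreach N, ?_⟩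
  · exact reach_subset (hreach N)
  · rintro B' ⟨S, w, hS, hwS, hwB, hedge, huniq, rfl⟩
    have hw : w ∈ zfExtend H d ((zfExtend H d)^[N] B) :=
      Or.inr ⟨S, hS, hwS, hedge, huniq⟩
    rw [hN] at hw
    exact Set.insert_subset hw subset_rfl

/-- Forcing in `H` yields forcing in any row of the product. -/
lemma rowCopy {d : ℕ} (hd : 3 ≤ d) (H : FHypergraph V) (H' : FHypergraph V')
    {X Y : Set V} (h : Relation.ReflTransGen (ZFStep H d) X Y) (v' : V')
    (Z : Set (V × V')) :
    Relation.ReflTransGen (ZFStep (cartProd H H') d)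
      ((fun x => (x, v')) '' X ∪ Z) ((fun x => (x, v')) '' Y ∪ Z) := by
  induction h with
  | refl => exact Relation.ReflTransGen.refl
  | @tail M M' hxy hstep ih =>
    obtain ⟨S₁, w₁, hcard, hwS, hwB, hedge, huniq, rfl⟩ := hstep
    have himg : (fun x => (x, v')) '' (insert w₁ M) ∪ Z
        = insert (w₁, v') ((fun x => (x, v')) '' M ∪ Z) := by
      rw [Set.image_insert_eq, Set.insert_union]
    by_cases hwZ : (w₁, v') ∈ (fun x => (x, v')) '' M ∪ Z
    · rw [himg, Set.insert_eq_of_mem hwZ]; exact ih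
    · refine ih.tail ?_
      refine ⟨S₁ ×ˢ ({v'} : Finset V'), (w₁, v'), by simp [hcard], by simp [hwS], hwZ,
        ?_, ?_, himg⟩
      · rw [insert_prodSing]
        exact Or.inl ⟨insert w₁ S₁, hedge, v', rfl⟩
      · intro u hu hmem
        have h2 : 2 ≤ S₁.card := by omega
        obtain ⟨hu2, hue⟩ := prodEdge_row_struct h2 hmem
        have hu1 : u.1 ∉ M := fun hm => hu (Or.inl ⟨u.1, hm, by
          rw [← hu2]⟩)
        have := huniq u.1 hu1 hue
        exact Prod.ext this hu2

/-- Forcing in `H'` yields forcing in any column of the product. -/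
lemma colCopy {d : ℕ} (hd : 3 ≤ d) (H : FHypergraph V) (H' : FHypergraph V')
    {X Y : Set V'} (h : Relation.ReflTransGen (ZFStep H' d) X Y) (v : V)
    (Z : Set (V × V')) :
    Relation.ReflTransGen (ZFStep (cartProd H H') d)
      ((fun y => (v, y)) '' X ∪ Z) ((fun y => (v, y)) '' Y ∪ Z) := by
  induction h with
  | refl => exact Relation.ReflTransGen.refl
  | @tail M M' hxy hstep ih =>
    obtain ⟨S₂, w₂, hcard, hwS, hwB, hedge, huniq, rfl⟩ := hstep
    have himg : (fun y => (v, y)) '' (insert w₂ M) ∪ Z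
        = insert (v, w₂) ((fun y => (v, y)) '' M ∪ Z) := by
      rw [Set.image_insert_eq, Set.insert_union]
    by_cases hwZ : (v, w₂) ∈ (fun y => (v, y)) '' M ∪ Z
    · rw [himg, Set.insert_eq_of_mem hwZ]; exact ih
    · refine ih.tail ?_
      refine ⟨({v} : Finset V) ×ˢ S₂, (v, w₂), by simp [hcard], by simp [hwS], hwZ,
        ?_, ?_, himg⟩
      · rw [insert_singProd]
        exact Or.inr ⟨v, insert w₂ S₂, hedge, rfl⟩
      · intro u hu hmem
        have h2 : 2 ≤ S₂.card := by omega
        obtain ⟨hu1, hue⟩ := prodEdge_col_struct h2 hmem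
        have hu2 : u.2 ∉ M := fun hm => hu (Or.inl ⟨u.2, hm, by
          rw [← hu1]⟩)
        have := huniq u.2 hu2 hue
        exact Prod.ext hu1 this

/-- The key invariant for the lower bound. -/
lemma prod_invariant (H : FHypergraph V) (H' : FHypergraph V') (d : ℕ)
    {B T : Set (V × V')}
    (hreach : Relation.ReflTransGen (ZFStep (cartProd H H') d) B T)
    {C : Set V} {D : Set V'}
    (hCcl : ∀ B', ZFStep H d C B' → B' ⊆ C)
    (hDcl : ∀ B', ZFStep H' d D B' → B' ⊆ D)
    (hbase : ∀ p ∈ B, p.1 ∈ C ∨ p.2 ∈ D) :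
    ∀ p ∈ T, p.1 ∈ C ∨ p.2 ∈ D := by
  induction hreach with
  | refl => exact hbase
  | @tail M M' hxy hstep ih =>
    obtain ⟨S, w, hcard, hwS, hwB, hedge, huniq, rfl⟩ := hstep
    intro p hp
    rcases Set.mem_insert_iff.mp hp with rfl | hp'
    · rcases hedge with ⟨e, he, v', hE⟩ | ⟨v, e', he', hE⟩
      · -- row edge
        have hwv : p.2 = v' := by
          have hm : p ∈ e ×ˢ ({v'} : Finset V') := hE ▸ Finset.mem_insert_self p S
          exact Finset.mem_singleton.mp (Finset.mem_product.mp hm).2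
        by_cases hD : p.2 ∈ D
        · exact Or.inr hD
        by_cases hC : p.1 ∈ C
        · exact Or.inl hC
        have hSv : ∀ q ∈ S, q.2 = v' := by
          intro q hq
          have hm : q ∈ e ×ˢ ({v'} : Finset V') := hE ▸ Finset.mem_insert_of_mem hq
          exact Finset.mem_singleton.mp (Finset.mem_product.mp hm).2
        have hstep' : ZFStep H d C (insert p.1 C) := by
          refine ⟨S.image Prod.fst, p.1, ?_, ?_, hC, ?_, ?_, rfl⟩
          · rw [card_image_fst hSv, hcard]
          · intro hm
            obtain ⟨q, hq, hq1⟩ := Finset.mem_image.mp hm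
            have hqw : q = p := Prod.ext hq1 ((hSv q hq).trans hwv.symm)
            exact hwS (hqw ▸ hq)
          · have him : (insert p S).image Prod.fst = e := by
              rw [hE, image_fst_prodSing]
            rw [Finset.image_insert] at him
            exact him ▸ he
          · intro u huC hue
            by_contra hne
            have hSeq : S = (S.image Prod.fst) ×ˢ ({v'} : Finset V') :=
              finset_eq_prodSing hSv
            have hins : insert (u, v') S
                = (insert u (S.image Prod.fst)) ×ˢ ({v'} : Finset V') := by
              conv_lhs => rw [hSeq]
              rw [insert_prodSing]
            have hmem2 : insert (u, v') S ∈ (cartProd H H').edges := by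
              rw [hins]
              exact Or.inl ⟨insert u (S.image Prod.fst), hue, v', rfl⟩
            have huM : (u, v') ∈ M := by
              by_contra h'
              exact hne (congrArg Prod.fst (huniq (u, v') h' hmem2))
            rcases ih (u, v') huM with h1 | h2
            · exact huC h1
            · exact hD (hwv ▸ h2)
        exact Or.inl (hCcl _ hstep' (Set.mem_insert p.1 C))
      · -- column edge
        have hwv : p.1 = v := by
          have hm : p ∈ ({v} : Finset V) ×ˢ e' := hE ▸ Finset.mem_insert_self p S
          exact Finset.mem_singleton.mp (Finset.mem_product.mp hm).1
        by_cases hC : p.1 ∈ C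
        · exact Or.inl hC
        by_cases hD : p.2 ∈ D
        · exact Or.inr hD
        have hSv : ∀ q ∈ S, q.1 = v := by
          intro q hq
          have hm : q ∈ ({v} : Finset V) ×ˢ e' := hE ▸ Finset.mem_insert_of_mem hq
          exact Finset.mem_singleton.mp (Finset.mem_product.mp hm).1
        have hstep' : ZFStep H' d D (insert p.2 D) := by
          refine ⟨S.image Prod.snd, p.2, ?_, ?_, hD, ?_, ?_, rfl⟩
          · rw [card_image_snd hSv, hcard]
          · intro hm
            obtain ⟨q, hq, hq2⟩ := Finset.mem_image.mp hm
            have hqw : q = p := Prod.ext ((hSv q hq).trans hwv.symm) hq2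
            exact hwS (hqw ▸ hq)
          · have him : (insert p S).image Prod.snd = e' := by
              rw [hE, image_snd_singProd]
            rw [Finset.image_insert] at him
            exact him ▸ he'
          · intro u huD hue
            by_contra hne
            have hSeq : S = ({v} : Finset V) ×ˢ (S.image Prod.snd) :=
              finset_eq_singProd hSv
            have hins : insert (v, u) S
                = ({v} : Finset V) ×ˢ (insert u (S.image Prod.snd)) := by
              conv_lhs => rw [hSeq]
              rw [insert_singProd]
            have hmem2 : insert (v, u) S ∈ (cartProd H H').edges := by
              rw [hins]
              exact Or.inr ⟨v, insert u (S.image Prod.snd), hue, rfl⟩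
            have huM : (v, u) ∈ M := by
              by_contra h'
              exact hne (congrArg Prod.snd (huniq (v, u) h' hmem2))
            rcases ih (v, u) huM with h1 | h2
            · exact hC (hwv ▸ h1)
            · exact huD h2
        exact Or.inr (hDcl _ hstep' (Set.mem_insert p.2 D))
    · exact ih p hp'

end ZFHelpers

theorem stmt19 {V V' : Type*} [DecidableEq V] [Fintype V] [DecidableEq V'] [Fintype V']
    {d : ℕ} (hd : 3 ≤ d) (H : FHypergraph V) (H' : FHypergraph V')
    (hH : H.IsUniform d) (hH' : H'.IsUniform d) (h1 : Z0 H' d = 1) :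
    Z0 (cartProd H H') d = Z0 H d := by
  classical
  have hneH : {k | ∃ B : Finset V, B.card = k ∧ IsZFSet H d (↑B : Set V)}.Nonempty := by
    refine ⟨(Finset.univ : Finset V).card, Finset.univ, rfl, ?_⟩
    unfold IsZFSet
    rw [Finset.coe_univ]
  obtain ⟨B, hBcard, hBzf⟩ : ∃ B : Finset V, B.card = Z0 H d ∧ IsZFSet H d ↑B :=
    Nat.sInf_mem hneH
  have hneH' : {k | ∃ B : Finset V', B.card = k ∧ IsZFSet H' d (↑B : Set V')}.Nonempty := by
    refine ⟨(Finset.univ : Finset V').card, Finset.univ, rfl, ?_⟩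
    unfold IsZFSet
    rw [Finset.coe_univ]
  have hmem' : ∃ B : Finset V', B.card = Z0 H' d ∧ IsZFSet H' d ↑B := Nat.sInf_mem hneH'
  rw [h1] at hmem'
  obtain ⟨B', hB'card, hB'zf⟩ := hmem'
  obtain ⟨b', rfl⟩ := Finset.card_eq_one.mp hB'card
  have hempty : ¬ IsZFSet H' d (∅ : Set V') := by
    intro hz
    have hle : Z0 H' d ≤ 0 :=
      Nat.sInf_le ⟨(∅ : Finset V'), Finset.card_empty, by rw [Finset.coe_empty]; exact hz⟩
    omega
  -- Upper bound
  have hupper : Z0 (cartProd H H') d ≤ Z0 H d := by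
    have hrow := rowCopy hd H H' hBzf b' (∅ : Set (V × V'))
    have hcols : ∀ A : Finset V,
        Relation.ReflTransGen (ZFStep (cartProd H H') d)
          ((fun x => (x, b')) '' Set.univ ∪ ∅)
          {p : V × V' | p.2 = b' ∨ p.1 ∈ A} := by
      intro A
      induction A using Finset.induction_on with
      | empty =>
        have he : {p : V × V' | p.2 = b' ∨ p.1 ∈ (∅ : Finset V)}
            = (fun x => (x, b')) '' Set.univ ∪ ∅ := by
          ext ⟨a, c⟩
          simp [eq_comm]
        rw [he]
      | @insert v A hv ih =>
        refine ih.trans ?_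
        have hcol := colCopy hd H H' hB'zf v {p : V × V' | p.2 = b' ∨ p.1 ∈ A}
        have e1 : (fun y => (v, y)) '' (↑({b'} : Finset V') : Set V')
            ∪ {p : V × V' | p.2 = b' ∨ p.1 ∈ A} = {p : V × V' | p.2 = b' ∨ p.1 ∈ A} := by
          ext ⟨a, c⟩
          simp only [Finset.coe_singleton, Set.image_singleton, Set.union_def,
            Set.mem_setOf_eq, Set.mem_singleton_iff, Prod.mk.injEq]
          constructor
          · rintro (⟨rfl, rfl⟩ | h)
            · exact Or.inl rfl
            · exact h
          · exact Or.inr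
        have e2 : (fun y => (v, y)) '' Set.univ ∪ {p : V × V' | p.2 = b' ∨ p.1 ∈ A}
            = {p : V × V' | p.2 = b' ∨ p.1 ∈ insert v A} := by
          ext ⟨a, c⟩
          simp only [Set.image_univ, Set.union_def, Set.mem_setOf_eq, Set.mem_range,
            Prod.mk.injEq, Finset.mem_insert]
          constructor
          · rintro (⟨y, rfl, rfl⟩ | h | h)
            · exact Or.inr (Or.inl rfl)
            · exact Or.inl h
            · exact Or.inr (Or.inr h)
          · rintro (h | rfl | h)
            · exact Or.inr (Or.inl h)
            · exact Or.inl ⟨c, rfl, rfl⟩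
            · exact Or.inr (Or.inr h)
        rw [e1, e2] at hcol
        exact hcol
    have hfinal := hrow.trans (hcols Finset.univ)
    have e3 : (fun x => (x, b')) '' (↑B : Set V) ∪ ∅ = ↑(B ×ˢ ({b'} : Finset V')) := by
      ext ⟨a, c⟩
      simp only [Set.union_empty, Set.mem_image, Finset.mem_coe, Finset.mem_product,
        Finset.mem_singleton, Prod.mk.injEq]
      constructor
      · rintro ⟨x, hx, rfl, rfl⟩; exact ⟨hx, rfl⟩
      · rintro ⟨ha, rfl⟩; exact ⟨a, ha, rfl, rfl⟩
    have e4 : {p : V × V' | p.2 = b' ∨ p.1 ∈ (Finset.univ : Finset V)} = Set.univ := by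
      ext p; simp
    rw [e3, e4] at hfinal
    have hle : Z0 (cartProd H H') d ≤ (B ×ˢ ({b'} : Finset V')).card :=
      Nat.sInf_le ⟨B ×ˢ ({b'} : Finset V'), rfl, hfinal⟩
    calc Z0 (cartProd H H') d ≤ (B ×ˢ ({b'} : Finset V')).card := hle
      _ = B.card := by simp
      _ = Z0 H d := hBcard
  -- Lower bound
  have hnePr : {k | ∃ Bh : Finset (V × V'), Bh.card = k ∧
      IsZFSet (cartProd H H') d (↑Bh : Set (V × V'))}.Nonempty := by
    refine ⟨(Finset.univ : Finset (V × V')).card, Finset.univ, rfl, ?_⟩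
    unfold IsZFSet
    rw [Finset.coe_univ]
  obtain ⟨Bh, hBhcard, hBhzf⟩ : ∃ Bh : Finset (V × V'), Bh.card = Z0 (cartProd H H') d ∧
      IsZFSet (cartProd H H') d ↑Bh := Nat.sInf_mem hnePr
  have hlower : Z0 H d ≤ Z0 (cartProd H H') d := by
    obtain ⟨C, hBC, hreachC, hCcl⟩ := exists_zfClosure H d (↑(Bh.image Prod.fst) : Set V)
    obtain ⟨D, _, hreachD, hDcl⟩ := exists_zfClosure H' d (∅ : Set V')
    have hDne : D ≠ Set.univ := by
      intro h
      refine hempty ?_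
      unfold IsZFSet
      rw [← h]
      exact hreachD
    obtain ⟨u₂, hu₂⟩ : ∃ x : V', x ∉ D := by
      by_contra hcon
      push_neg at hcon
      exact hDne (Set.eq_univ_of_forall hcon)
    have hbase : ∀ p ∈ (↑Bh : Set (V × V')), p.1 ∈ C ∨ p.2 ∈ D := by
      intro p hp
      exact Or.inl (hBC (Finset.mem_coe.mpr
        (Finset.mem_image_of_mem Prod.fst (Finset.mem_coe.mp hp))))
    have hinv := prod_invariant H H' d hBhzf hCcl hDcl hbase
    have hCuniv : C = Set.univ := Set.eq_univ_of_forall fun v =>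
      (hinv (v, u₂) (Set.mem_univ _)).resolve_right hu₂
    have hzf : IsZFSet H d (↑(Bh.image Prod.fst) : Set V) := by
      unfold IsZFSet
      rw [← hCuniv]
      exact hreachC
    have h5 : Z0 H d ≤ (Bh.image Prod.fst).card := Nat.sInf_le ⟨Bh.image Prod.fst, rfl, hzf⟩
    calc Z0 H d ≤ (Bh.image Prod.fst).card := h5
      _ ≤ Bh.card := Finset.card_image_le
      _ = Z0 (cartProd H H') d := hBhcard
  omega
end
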